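/- Let A be a unital C*-algebra. If A has the second type of tracial nuclear dimension at most n (T²dim_nuc(A) ≤ n), then A has the new type of tracial nuclear dimension at most n. -/

import Mathlib

open Filter
open scoped Matrix.Norms.L2Operator

/-- Cuntz subequivalence. -/
def CuntzLE {A : Type*} [CStarAlgebra A] (a b : A) : Prop :=
  ∃ v : ℕ → A, Tendsto (fun n => ‖v n * b * star (v n) - a‖) atTop (nhds 0)

/-- Positivity via the star structure: in a C*-algebra, `x ≥ 0` iff `x = y* y`. -/
def StarPos {R : Type*} [Mul R] [Star R] (x : R) : Prop := ∃ y : R, x = star y * y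

/-- A map between star rings is completely positive if it maps positive matrices (of every
size) to positive matrices. -/
def IsCPMap {R S : Type*} [NonUnitalSemiring R] [StarRing R] [NonUnitalSemiring S]
    [StarRing S] (f : R → S) : Prop :=
  ∀ (k : ℕ) (M : Matrix (Fin k) (Fin k) R), (∃ N : Matrix (Fin k) (Fin k) R, M = star N * N) →
    ∃ N' : Matrix (Fin k) (Fin k) S, M.map f = star N' * N'

/-- The (generic) finite-dimensional C*-algebra `F = F₀ ⊕ ⋯ ⊕ Fₙ`, where each ideal `Fᵢ`
is a direct sum of matrix algebras `M_{d i l}(ℂ)`, `l < m i`. -/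
abbrev FDCStar (n : ℕ) (m : Fin (n + 1) → ℕ) (d : ∀ i, Fin (m i) → ℕ) : Type :=
  ∀ i : Fin (n + 1), ∀ l : Fin (m i), Matrix (Fin (d i l)) (Fin (d i l)) ℂ

/-- Fu's second type of tracial nuclear dimension at most `n` (Definition 2.8). -/
def T2TracialNucDim (A : Type*) [CStarAlgebra A] [PartialOrder A] [StarOrderedRing A]
    (n : ℕ) : Prop :=
  ∀ (F : Finset A), (∀ x ∈ F, 0 ≤ x) → ∀ ε : ℝ, 0 < ε → ∀ a : A, 0 ≤ a → a ≠ 0 →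
    ∃ (m : Fin (n + 1) → ℕ) (d : ∀ i, Fin (m i) → ℕ)
      (ψ : A → FDCStar n m d) (φ : FDCStar n m d → A),
      IsLinearMap ℂ ψ ∧ IsLinearMap ℂ φ ∧ IsCPMap ψ ∧ IsCPMap φ ∧
      (∀ x ∈ F, ∃ x' : A, 0 ≤ x' ∧ CuntzLE x' a ∧ ‖x - x' - φ (ψ x)‖ < ε) ∧
      (∀ x : A, ‖ψ x‖ ≤ ‖x‖) ∧
      (∀ i : Fin (n + 1),
        (∀ y, ‖φ (Pi.single i y)‖ ≤ ‖y‖) ∧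
        (∀ y z, StarPos y → StarPos z → y * z = 0 →
          φ (Pi.single i y) * φ (Pi.single i z) = 0))

/-- The new type of tracial nuclear dimension at most `n` (Definition 2.9). -/
def NewTracialNucDim (A : Type*) [CStarAlgebra A] [PartialOrder A] [StarOrderedRing A]
    (n : ℕ) : Prop :=
  ∀ (F : Finset A), (∀ x ∈ F, 0 ≤ x) → ∀ ε : ℝ, 0 < ε → ∀ a : A, 0 ≤ a → a ≠ 0 →
    ∃ (m : Fin (n + 1) → ℕ) (d : ∀ i, Fin (m i) → ℕ)
      (ψ : A → FDCStar n m d) (φ : FDCStar n m d → A),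
      IsLinearMap ℂ ψ ∧ IsLinearMap ℂ φ ∧ IsCPMap ψ ∧ IsCPMap φ ∧
      (∀ x ∈ F, ∃ x' : A, 0 ≤ x' ∧ ‖x - x' - φ (ψ x)‖ < ε) ∧
      CuntzLE (cfc (fun t : ℝ => max 0 (t - ε)) (1 - φ (ψ 1))) a ∧
      (∀ x : A, ‖ψ x‖ ≤ ‖x‖) ∧
      (∀ i : Fin (n + 1),
        (∀ y, ‖φ (Pi.single i y)‖ ≤ ‖y‖) ∧
        (∀ y z, StarPos y → StarPos z → y * z = 0 →
          φ (Pi.single i y) * φ (Pi.single i z) = 0))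

/-!
Apply the `T²` approximation to `F ∪ {1}`. For `x = 1` it gives `x' ≥ 0` with `x' ≾ a` and
`‖b - x'‖ = η < ε`, where `b = 1 - φ(ψ(1))`, so `b - η ≤ x'`. Conjugating by `k(b)`, where
`k(t)² = (t - ε)₊ / (t - η)` for `t ≥ ε` and `k = 0` below `ε`, turns `b - η` into `(b - ε)₊`,
hence `(b - ε)₊ ≤ k(b) x' k(b) ≾ x' ≾ a`.
-/

section Cuntz

variable {A : Type*} [CStarAlgebra A]

theorem cuntzLE_iff {x y : A} :
    CuntzLE x y ↔ ∀ δ > 0, ∃ v : A, ‖v * y * star v - x‖ ≤ δ := by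
  constructor
  · rintro ⟨v, hv⟩ δ hδ
    obtain ⟨k, hk⟩ := (hv.eventually (Iic_mem_nhds hδ)).exists
    exact ⟨v k, hk⟩
  · intro h
    choose v hv using fun k : ℕ => h (1 / (k + 1)) Nat.one_div_pos_of_nat
    exact ⟨v, squeeze_zero (fun _ => norm_nonneg _) hv tendsto_one_div_add_atTop_nhds_zero_nat⟩

theorem cuntzLE_conj (v y : A) : CuntzLE (v * y * star v) y :=
  ⟨fun _ => v, by simp⟩

theorem CuntzLE.trans {x y z : A} (hxy : CuntzLE x y) (hyz : CuntzLE y z) : CuntzLE x z := by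
  refine cuntzLE_iff.2 fun δ hδ => ?_
  obtain ⟨v, hv⟩ := cuntzLE_iff.1 hxy (δ / 2) (half_pos hδ)
  obtain ⟨w, hw⟩ := cuntzLE_iff.1 hyz (δ / 2 / (‖v‖ ^ 2 + 1)) (by positivity)
  refine ⟨v * w, ?_⟩
  have hsplit : v * w * z * star (v * w) - x
      = v * (w * z * star w - y) * star v + (v * y * star v - x) := by
    rw [star_mul]; noncomm_ring
  calc ‖v * w * z * star (v * w) - x‖
      ≤ ‖v‖ * ‖w * z * star w - y‖ * ‖star v‖ + ‖v * y * star v - x‖ := by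
        rw [hsplit]; exact (norm_add_le _ _).trans (by gcongr; exact norm_mul₃_le)
    _ ≤ (‖v‖ ^ 2 + 1) * (δ / 2 / (‖v‖ ^ 2 + 1)) + δ / 2 := by
        rw [norm_star, mul_right_comm, ← sq]; gcongr; linarith
    _ = δ := by field_simp; ring

theorem cfc_mul_mul_cfc (f g : ℝ → ℝ) (a : A) (hf : ContinuousOn f (spectrum ℝ a))
    (hg : ContinuousOn g (spectrum ℝ a)) :
    cfc f a * cfc g a * cfc f a = cfc (fun t => f t * g t * f t) a := by
  rw [← cfc_mul f g a hf hg, ← cfc_mul (fun t => f t * g t) f a (hf.mul hg) hf]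

variable [PartialOrder A] [StarOrderedRing A]

theorem cuntzLE_of_le {x y : A} (hx : 0 ≤ x) (hxy : x ≤ y) : CuntzLE x y := by
  have hy : 0 ≤ y := hx.trans hxy
  have hspec : ∀ t ∈ spectrum ℝ y, 0 ≤ t := fun t ht => spectrum_nonneg_of_nonneg hy ht
  refine cuntzLE_iff.2 fun δ hδ => ?_
  have hpos : ∀ t ∈ spectrum ℝ y, 0 < t + δ := fun t ht => by linarith [hspec t ht]
  set s := CFC.sqrt x
  set g := cfc (fun t : ℝ => (√(t + δ))⁻¹) y
  set r := cfc (fun t : ℝ => √(δ / (t + δ))) y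
  have hg : ContinuousOn (fun t : ℝ => (√(t + δ))⁻¹) (spectrum ℝ y) :=
    ContinuousOn.inv₀ (by fun_prop) fun t ht => (Real.sqrt_pos.2 (hpos t ht)).ne'
  have hr : ContinuousOn (fun t : ℝ => √(δ / (t + δ))) (spectrum ℝ y) :=
    (continuousOn_const.div (by fun_prop) fun t ht => (hpos t ht).ne').sqrt
  -- spectrally, `t / (t + δ) + δ / (t + δ) = 1`
  have hgyg : g * y * g = 1 - r * r := by
    nth_rewrite 1 [← cfc_id' ℝ y]
    rw [cfc_mul_mul_cfc _ (fun t => t) y hg (continuousOn_id' _), ← cfc_mul _ _ y hr hr,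
      ← cfc_one ℝ y, ← cfc_sub _ _ y]
    refine cfc_congr fun t ht => ?_
    have := hpos t ht
    rw [Pi.one_apply, Real.mul_self_sqrt (by positivity), mul_right_comm, ← mul_inv,
      Real.mul_self_sqrt this.le]
    field_simp
    ring
  have hs : star s = s := (IsSelfAdjoint.of_nonneg (CFC.sqrt_nonneg x)).star_eq
  have hr' : star r = r := IsSelfAdjoint.cfc.star_eq
  have hdiff : x - s * g * y * star (s * g) = star (r * s) * (r * s) := by
    rw [star_mul, star_mul, hs, IsSelfAdjoint.cfc.star_eq, hr',
      show s * g * y * (g * s) = s * (g * y * g) * s by noncomm_ring, hgyg]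
    nth_rewrite 1 [← CFC.sqrt_mul_sqrt_self x]
    noncomm_ring
  refine ⟨s * g, ?_⟩
  calc ‖s * g * y * star (s * g) - x‖ = ‖star (r * s) * (r * s)‖ := by
        rw [← norm_neg, neg_sub, hdiff]
    _ = ‖r * x * r‖ := by
        rw [CStarRing.norm_star_mul_self, ← CStarRing.norm_self_mul_star, star_mul, hs, hr',
          show r * s * (s * r) = r * (s * s) * r by noncomm_ring, CFC.sqrt_mul_sqrt_self x]
    _ ≤ ‖r * y * r‖ := by
        refine CStarAlgebra.norm_le_norm_of_nonneg_of_le ?_ ?_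
        · simpa only [hr'] using star_left_conjugate_nonneg hx r
        · simpa only [hr'] using star_left_conjugate_le_conjugate hxy r
    _ ≤ δ := by
        nth_rewrite 1 [← cfc_id' ℝ y]
        rw [cfc_mul_mul_cfc _ (fun t => t) y hr (continuousOn_id' _)]
        refine norm_cfc_le hδ.le fun t ht => ?_
        have := hpos t ht
        rw [mul_right_comm, Real.mul_self_sqrt (by positivity), Real.norm_eq_abs,
          abs_of_nonneg (by have := hspec t ht; positivity), div_mul_eq_mul_div,
          div_le_iff₀ this]
        nlinarith [hspec t ht]

theorem cuntzLE_cfc_posPart_sub_of_norm_sub_lt {b x : A} (hb : IsSelfAdjoint b)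
    (hx : IsSelfAdjoint x) {ε : ℝ} (h : ‖b - x‖ < ε) :
    CuntzLE (cfc (fun t : ℝ => max 0 (t - ε)) b) x := by
  set η := ‖b - x‖
  set k : ℝ → ℝ := fun t => √(max 0 (t - ε) / max (t - η) (ε - η))
  have hk : Continuous k :=
    Real.continuous_sqrt.comp <| (by fun_prop : Continuous fun t : ℝ => max 0 (t - ε)).div
      (by fun_prop) fun t => (lt_max_of_lt_right (sub_pos.2 h)).ne'
  -- where the numerator of `k ^ 2` is nonzero, its denominator is `t - η`
  have hcut : cfc (fun t : ℝ => max 0 (t - ε)) b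
      = cfc k b * (b - algebraMap ℝ A η) * cfc k b := by
    rw [← cfc_id' ℝ b, ← cfc_const η b, ← cfc_sub _ _ b, cfc_id' ℝ b,
      cfc_mul_mul_cfc _ _ b hk.continuousOn (by fun_prop)]
    refine cfc_congr fun t _ => ?_
    rcases le_or_gt t ε with ht | ht
    · simp [k, max_eq_left (sub_nonpos.2 ht)]
    · have hη : 0 < t - η := by linarith
      rw [mul_right_comm, Real.mul_self_sqrt (by positivity), max_eq_right (by linarith),
        max_eq_left (by linarith)]
      field_simp
  have hle : b - algebraMap ℝ A η ≤ x := sub_le_comm.1 (hb.sub hx).le_algebraMap_norm_self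
  have hr : star (cfc k b) = cfc k b := IsSelfAdjoint.cfc.star_eq
  refine CuntzLE.trans (y := cfc k b * x * cfc k b)
    (cuntzLE_of_le (cfc_nonneg fun t _ => le_max_left 0 _) ?_) ?_
  · simpa only [hcut, hr] using star_left_conjugate_le_conjugate hle (cfc k b)
  · simpa only [hr] using cuntzLE_conj (cfc k b) x

end Cuntz

theorem IsCPMap.exists_map_star_mul_self {R S : Type*} [NonUnitalSemiring R] [StarRing R]
    [NonUnitalSemiring S] [StarRing S] {f : R → S} (hf : IsCPMap f) (y : R) :
    ∃ z, f (star y * y) = star z * z := by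
  obtain ⟨N, hN⟩ := hf 1 (Matrix.of fun _ _ => star y * y)
    ⟨Matrix.of fun _ _ => y, by ext; simp [Matrix.mul_apply, Matrix.star_apply]⟩
  refine ⟨N 0 0, ?_⟩
  simpa [Matrix.mul_apply, Matrix.star_apply] using congrFun (congrFun hN 0) 0

/-- `T²dim_nuc(A) ≤ n` implies the new type of tracial nuclear dimension
at most `n`. -/
theorem t2_implies_new_tracial_nuc_dim {A : Type*} [CStarAlgebra A] [PartialOrder A]
    [StarOrderedRing A] (n : ℕ) (h : T2TracialNucDim A n) :
    NewTracialNucDim A n := by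
  classical
  intro F hF ε hε a ha ha0
  obtain ⟨m, d, ψ, φ, hψlin, hφlin, hψcp, hφcp, happrox, hψnorm, hφ⟩ :=
    h (insert 1 F) (Finset.forall_mem_insert _ _ _ |>.2 ⟨zero_le_one, hF⟩) ε hε a ha ha0
  have hφψ : IsSelfAdjoint (φ (ψ 1)) := by
    obtain ⟨z, hz⟩ := hψcp.exists_map_star_mul_self 1
    obtain ⟨w, hw⟩ := hφcp.exists_map_star_mul_self z
    rw [star_one, one_mul] at hz
    rw [hz, hw]
    exact .star_mul_self w
  obtain ⟨x', hx'0, hx'a, hx'⟩ := happrox 1 (Finset.mem_insert_self 1 F)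
  refine ⟨m, d, ψ, φ, hψlin, hφlin, hψcp, hφcp, fun x hx => ?_, ?_, hψnorm, hφ⟩
  · obtain ⟨x'', hx''0, -, hx''⟩ := happrox x (Finset.mem_insert_of_mem hx)
    exact ⟨x'', hx''0, hx''⟩
  · refine (cuntzLE_cfc_posPart_sub_of_norm_sub_lt ((IsSelfAdjoint.one A).sub hφψ)
      hx'0.isSelfAdjoint ?_).trans hx'a
    rwa [sub_right_comm]
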